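/- Let n ≥ 2, let m ≥ 1 be an integer, let k > 0, and let ξ ∈ ℝⁿ with ξ ≠ 0. Then there exist complex vectors μ₁, μ₂ ∈ ℂⁿ such that μ₁·μ₁ = k², μ₂·μ₂ = k², and m·μ₁ + μ₂ = ξ (where ξ ∈ ℝⁿ is viewed as a vector in ℂⁿ with real entries). -/

import Mathlib

/-!
With `μ₂ = ξ - m μ₁` and `μ₁ ⬝ᵥ μ₁ = k²`, the condition `μ₂ ⬝ᵥ μ₂ = k²` becomes the linear condition
`ξ ⬝ᵥ μ₁ = c` with `c = (|ξ|² + (m² - 1) k²) / (2m)`. A complex `μ₁` meeting both conditions is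
`(c / |ξ|²) ξ + β η`, where `η` is a real unit vector orthogonal to `ξ` (this needs `n ≥ 2`) and
`β² = k² - c² / |ξ|²`.
-/

open Module Matrix InnerProductSpace

theorem exists_norm_eq_one_inner_eq_zero {𝕜 E : Type*} [RCLike 𝕜] [NormedAddCommGroup E]
    [InnerProductSpace 𝕜 E] [FiniteDimensional 𝕜 E] (hE : 2 ≤ finrank 𝕜 E) (x : E) :
    ∃ y : E, ‖y‖ = 1 ∧ ⟪x, y⟫_𝕜 = 0 := by
  have hspan : finrank 𝕜 (𝕜 ∙ x) ≤ 1 := (finrank_span_le_card {x}).trans (by simp)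
  have hperp : (𝕜 ∙ x)ᗮ ≠ ⊥ := by
    intro h
    have := (𝕜 ∙ x).finrank_add_finrank_orthogonal
    rw [h, finrank_bot] at this
    omega
  obtain ⟨v, hv, hv0⟩ := Submodule.exists_mem_ne_zero_of_ne_bot hperp
  refine ⟨(‖v‖⁻¹ : 𝕜) • v, norm_smul_inv_norm hv0, ?_⟩
  rw [inner_smul_right, Submodule.mem_orthogonal_singleton_iff_inner_right.mp hv, mul_zero]

theorem ofReal_dotProduct_ofReal {ι : Type*} [Fintype ι] (x y : EuclideanSpace ℝ ι) :
    (fun j => (x j : ℂ)) ⬝ᵥ (fun j => (y j : ℂ)) = (⟪x, y⟫_ℝ : ℂ) := by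
  rw [EuclideanSpace.inner_eq_star_dotProduct, star_trivial, dotProduct_comm]
  exact (Complex.ofRealHom.map_dotProduct _ _).symm

theorem exists_dotProduct_self_eq_and_ofReal_dotProduct_eq {ι : Type*} [Fintype ι]
    (hι : 2 ≤ Fintype.card ι) {ξ : EuclideanSpace ℝ ι} (hξ : ξ ≠ 0) (s c : ℂ) :
    ∃ μ : ι → ℂ, μ ⬝ᵥ μ = s ∧ (fun j => (ξ j : ℂ)) ⬝ᵥ μ = c := by
  obtain ⟨η, hη, hξη⟩ := exists_norm_eq_one_inner_eq_zero (𝕜 := ℝ) (by simpa using hι) ξ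
  set ξc : ι → ℂ := fun j => (ξ j : ℂ)
  set ηc : ι → ℂ := fun j => (η j : ℂ)
  set t : ℂ := ξc ⬝ᵥ ξc with ht_def
  have ht : t ≠ 0 := by
    simp only [t, ξc, ofReal_dotProduct_ofReal, real_inner_self_eq_norm_sq]
    exact_mod_cast pow_ne_zero 2 (norm_ne_zero_iff.mpr hξ)
  have hξηc : ξc ⬝ᵥ ηc = 0 := by simp [ξc, ηc, ofReal_dotProduct_ofReal, hξη]
  have hηηc : ηc ⬝ᵥ ηc = 1 := by simp [ηc, ofReal_dotProduct_ofReal, hη]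
  clear_value ξc ηc t
  obtain ⟨β, hβ⟩ := IsAlgClosed.exists_eq_mul_self (s - c ^ 2 / t)
  refine ⟨(c / t) • ξc + β • ηc, ?_, ?_⟩
  · simp only [add_dotProduct, dotProduct_add, smul_dotProduct, dotProduct_smul,
      dotProduct_comm ηc ξc, hξηc, hηηc, ← ht_def, smul_eq_mul, mul_zero, add_zero, zero_add,
      mul_one]
    rw [← hβ]
    field_simp
    ring
  · simp only [dotProduct_add, dotProduct_smul, hξηc, ← ht_def, smul_eq_mul, mul_zero,
      add_zero]
    field_simp

theorem complex_waveVectors_exist_general (n m : ℕ) (hn : 2 ≤ n) (hm : 1 ≤ m)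
    (k : ℝ) (ξ : EuclideanSpace ℝ (Fin n)) (hξ : ξ ≠ 0) :
    ∃ μ₁ μ₂ : Fin n → ℂ,
      (∑ j, μ₁ j ^ 2 = (k : ℂ) ^ 2) ∧ (∑ j, μ₂ j ^ 2 = (k : ℂ) ^ 2) ∧
      (∀ j, (m : ℂ) * μ₁ j + μ₂ j = (ξ j : ℂ)) := by
  set ξc : Fin n → ℂ := fun j => (ξ j : ℂ)
  have hm0 : (m : ℂ) ≠ 0 := by exact_mod_cast (Nat.one_le_iff_ne_zero.mp hm)
  have sum_sq : ∀ v : Fin n → ℂ, ∑ j, v j ^ 2 = v ⬝ᵥ v := fun v => by simp only [dotProduct, sq]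
  obtain ⟨μ, hμμ, hξμ⟩ := exists_dotProduct_self_eq_and_ofReal_dotProduct_eq
    (by simpa using hn) hξ ((k : ℂ) ^ 2) ((ξc ⬝ᵥ ξc + ((m : ℂ) ^ 2 - 1) * k ^ 2) / (2 * m))
  refine ⟨μ, ξc - (m : ℂ) • μ, (sum_sq μ).trans hμμ, ?_, fun j => by simp [ξc]⟩
  calc ∑ j, (ξc - (m : ℂ) • μ) j ^ 2
      = ξc ⬝ᵥ ξc - 2 * m * (ξc ⬝ᵥ μ) + m ^ 2 * (μ ⬝ᵥ μ) := by
        rw [sum_sq]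
        simp only [sub_dotProduct, dotProduct_sub, smul_dotProduct, dotProduct_smul, smul_eq_mul,
          dotProduct_comm μ ξc]
        ring
    _ = k ^ 2 := by
        rw [hξμ, hμμ]
        field_simp
        ring

/-- the key construction in Theorem 2.3: for every nonzero frequency ξ ∈ ℝⁿ
there are complex vectors μ₁, μ₂ ∈ ℂⁿ with μ₁·μ₁ = μ₂·μ₂ = k² (bilinear dot product) and
m·μ₁ + μ₂ = ξ. -/
theorem complex_waveVectors_exist (n m : ℕ) (hn : 2 ≤ n) (hm : 1 ≤ m)
    (k : ℝ) (hk : 0 < k) (ξ : EuclideanSpace ℝ (Fin n)) (hξ : ξ ≠ 0) :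
    ∃ μ₁ μ₂ : Fin n → ℂ,
      (∑ j, μ₁ j ^ 2 = (k : ℂ) ^ 2) ∧ (∑ j, μ₂ j ^ 2 = (k : ℂ) ^ 2) ∧
      (∀ j, (m : ℂ) * μ₁ j + μ₂ j = (ξ j : ℂ)) :=
  complex_waveVectors_exist_general n m hn hm k ξ hξ
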